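/- Let ω = e^{2πi/3}, Λ = ℤω ⊕ ℤ, ⟨z,w⟩ := Re(z·conj(w)), K = 4π/3 and z_S = i/√3. Suppose f : ℂ → ℂ satisfies f(z+γ) = e^{−i⟨γ,K⟩}f(z) for all γ ∈ Λ and f(ωz) = f(z) for all z ∈ ℂ. Then for all ζ ∈ ℂ: f(z_S + ωζ) = ω̄·f(z_S + ζ) and f(−z_S + ωζ) = ω·f(−z_S + ζ). -/

import Mathlib

open Complex

noncomputable section

/-- `ω = e^{2πi/3}`. -/
def ω : ℂ := Complex.exp (2 * (Real.pi : ℂ) * Complex.I / 3)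

/-- The hexagonal lattice `Λ = ℤω ⊕ ℤ`. -/
def inΛ (γ : ℂ) : Prop := ∃ m n : ℤ, γ = (m : ℂ) * ω + (n : ℂ)

/-- The pairing `⟨z,w⟩ = Re (z ⬝ conj w)`. -/
def pairing (z w : ℂ) : ℝ := (z * (starRingEnd ℂ) w).re

/-- The Dirac momentum `K = 4π/3`. -/
def Kpt : ℂ := 4 * (Real.pi : ℂ) / 3

/-- The stacking point `z_S = i/√3`. -/
def zS : ℂ := Complex.I / (Real.sqrt 3 : ℂ)

/-- The rotation `ζ ↦ r ζ` about the fixed point `z₀` of `z ↦ r z + γ` is the rotation about the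
origin followed by the translation by `γ`. -/
theorem apply_add_mul_of_mul_add_eq {f : ℂ → ℂ} {r γ c z₀ : ℂ}
    (hper : ∀ z, f (z + γ) = c * f z) (hrot : ∀ z, f (r * z) = f z)
    (hfix : r * z₀ + γ = z₀) (ζ : ℂ) :
    f (z₀ + r * ζ) = c * f (z₀ + ζ) := by
  have hsplit : z₀ + r * ζ = r * (z₀ + ζ) + γ := by linear_combination -hfix
  rw [hsplit, hper, hrot]

theorem inΛ_ω_add_one : inΛ (ω + 1) := ⟨1, 1, by push_cast; ring⟩

theorem inΛ.neg {γ : ℂ} (hγ : inΛ γ) : inΛ (-γ) := by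
  obtain ⟨m, n, rfl⟩ := hγ
  exact ⟨-m, -n, by push_cast; ring⟩

theorem pairing_neg_left (z w : ℂ) : pairing (-z) w = -pairing z w := by
  simp [pairing]

theorem two_pi_div_three_mul_I : 2 * (Real.pi : ℂ) * I / 3 = ((2 * Real.pi / 3 : ℝ) : ℂ) * I := by
  push_cast; ring

theorem ω_eq : ω = -1 / 2 + (Real.sqrt 3 / 2 : ℝ) * I := by
  have hangle : 2 * Real.pi / 3 = Real.pi - Real.pi / 3 := by ring
  rw [ω, two_pi_div_three_mul_I, exp_mul_I, ← ofReal_cos, ← ofReal_sin, hangle,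
    Real.cos_pi_sub, Real.sin_pi_sub, Real.cos_pi_div_three, Real.sin_pi_div_three]
  push_cast; ring

theorem ω_mul_zS_add : ω * zS + (ω + 1) = zS := by
  have hsqrt : ((Real.sqrt 3 : ℝ) : ℂ) ^ 2 = 3 := by
    rw [← ofReal_pow, Real.sq_sqrt (by norm_num)]; norm_num
  have hne : ((Real.sqrt 3 : ℝ) : ℂ) ≠ 0 := by simp
  rw [ω_eq, zS]
  field_simp
  push_cast
  linear_combination I * hsqrt + ((Real.sqrt 3 : ℝ) : ℂ) * I_sq

theorem pairing_ω_add_one_Kpt : pairing (ω + 1) Kpt = 2 * Real.pi / 3 := by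
  have hK : Kpt = ((4 * Real.pi / 3 : ℝ) : ℂ) := by rw [Kpt]; push_cast; ring
  rw [pairing, hK, conj_ofReal, ω_eq]
  simp
  ring

theorem exp_neg_I_mul_pairing_ω_add_one :
    exp (-I * (pairing (ω + 1) Kpt : ℂ)) = (starRingEnd ℂ) ω := by
  rw [pairing_ω_add_one_Kpt, ω, two_pi_div_three_mul_I, ← exp_conj, map_mul, conj_ofReal,
    conj_I]
  ring_nf

theorem exp_neg_I_mul_pairing_neg_ω_add_one :
    exp (-I * (pairing (-(ω + 1)) Kpt : ℂ)) = ω := by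
  rw [pairing_neg_left, pairing_ω_add_one_Kpt, ω]
  push_cast; ring_nf

theorem stmt12 (f : ℂ → ℂ)
    (hf1 : ∀ γ : ℂ, inΛ γ → ∀ z : ℂ,
      f (z + γ) = Complex.exp (-Complex.I * (pairing γ Kpt : ℂ)) * f z)
    (hf2 : ∀ z : ℂ, f (ω * z) = f z) :
    ∀ ζ : ℂ, f (zS + ω * ζ) = (starRingEnd ℂ) ω * f (zS + ζ) ∧
      f (-zS + ω * ζ) = ω * f (-zS + ζ) := by
  intro ζ
  have hper := hf1 (ω + 1) inΛ_ω_add_one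
  have hper_neg := hf1 (-(ω + 1)) inΛ_ω_add_one.neg
  rw [exp_neg_I_mul_pairing_ω_add_one] at hper
  rw [exp_neg_I_mul_pairing_neg_ω_add_one] at hper_neg
  exact ⟨apply_add_mul_of_mul_add_eq hper hf2 ω_mul_zS_add ζ,
    apply_add_mul_of_mul_add_eq hper_neg hf2 (by linear_combination -ω_mul_zS_add) ζ⟩

end
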